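/- arXiv:1211.5787 — 3 statements merged into one kernel-verified Lean document; each statement's English description precedes it below -/
import Mathlib

section
/- Let c > 1 and n > 0. For every ε > 0, during the time interval [0, n/(c+1) - ε] an agent moving at speed c travels total arc length less than c·n/(c+1), so the set of points of the cycle it visits is contained in an arc of length less than c·n/(c+1); the complementary arc has length greater than n/(c+1). An agent of speed 1 starting at the midpoint of this complementary arc and traveling total distance less than n/(c+1) in the same interval remains inside it. Hence the two agents cannot meet before time n/(c+1). -/
theorem stmt_5 (c n ε : ℝ) (hc : 1 < c) (hn : 0 < n) (hε : 0 < ε)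
    (t : ℝ) (ht : t = n / (c + 1) - ε) (ht0 : 0 ≤ t)
    -- [ℓ, r] is the arc (lifted to ℝ) visited by the speed-c agent starting at 0
    (ℓ r : ℝ) (hℓ : ℓ ≤ 0) (hr : 0 ≤ r) (hlen : r - ℓ ≤ c * t) :
    c * t < c * n / (c + 1) ∧
    n - (r - ℓ) > n / (c + 1) ∧
    -- for any arc [ℓ', r'] of total length ≤ t visited by the speed-1 agent
    -- relative to its start, the adversary can pick a starting point p so that
    -- the two agents never occupy the same point of the cycle (reals mod n)
    ∀ ℓ' r' : ℝ, ℓ' ≤ 0 → 0 ≤ r' → r' - ℓ' ≤ t →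
      ∃ p : ℝ, ∀ x y : ℝ, ℓ ≤ x → x ≤ r → p + ℓ' ≤ y → y ≤ p + r' →
        ¬ ∃ k : ℤ, y = x + k * n := by
  have hc1 : (0:ℝ) < c + 1 := by linarith
  have hc0 : (0:ℝ) < c := by linarith
  have hte : t * (c + 1) = n - ε * (c + 1) := by
    rw [ht]; field_simp
  have hεc : 0 < ε * (c + 1) := mul_pos hε hc1
  refine ⟨?_, ?_, ?_⟩
  · rw [lt_div_iff₀ hc1]
    nlinarith
  · rw [gt_iff_lt, div_lt_iff₀ hc1]
    nlinarith
  · intro ℓ' r' hℓ' hr' hlen'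
    refine ⟨n / 2 + (r + ℓ) / 2 - (ℓ' + r') / 2, ?_⟩
    intro x y hx hxr hy hyr ⟨k, hk⟩
    have hkn : (k : ℝ) * n = y - x := by linarith
    have h1 : 0 < (k : ℝ) * n := by nlinarith
    have h2 : (k : ℝ) * n < n := by nlinarith
    have hk1 : (k : ℝ) < 1 := by
      by_contra h
      push_neg at h
      nlinarith
    have hk0 : 0 < (k : ℝ) := by
      by_contra h
      push_neg at h
      nlinarith
    have : (0 : ℤ) < k := by exact_mod_cast hk0
    have : (1 : ℝ) ≤ (k : ℝ) := by exact_mod_cast this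
    linarith
end

section
/- Let c > 1 and n > 0, and set τ = min(n/2, n/c). For every initial clockwise distance d ∈ [0, n) from agent A (speed c) to agent B (speed 1), the pebble algorithm (walk clockwise; upon first reaching the other agent's starting pebble after traveling distance strictly less than τ, turn around and walk anticlockwise forever) achieves rendezvous within time max(n/(2(c-1)), n/c). -/
/-- Position (lifted to ℝ, clockwise positive) of the faster agent `A`, which
starts at 0, walks clockwise at speed `c`, and, if `d < τ` (it reaches the
other agent's pebble after distance `d < τ`), turns around at time `d/c`. -/
noncomputable def posA (c d τ t : ℝ) : ℝ :=
  if d < τ then (if t ≤ d / c then c * t else d - c * (t - d / c)) else c * t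

/-- Position of the slower agent `B`, which starts at `d`, walks clockwise at
speed 1, and, if `n - d < τ` (it reaches the other agent's pebble after
distance `n - d < τ`), turns around at time `n - d`. -/
noncomputable def posB (n d τ t : ℝ) : ℝ :=
  if n - d < τ then (if t ≤ n - d then d + t else n - (t - (n - d))) else d + t

theorem stmt_11 (c n : ℝ) (hc : 1 < c) (hn : 0 < n) :
    ∀ d : ℝ, 0 ≤ d → d < n →
      ∃ t : ℝ, 0 ≤ t ∧ t ≤ max (n / (2 * (c - 1))) (n / c) ∧
        ∃ k : ℤ, posA c d (min (n / 2) (n / c)) t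
                = posB n d (min (n / 2) (n / c)) t + k * n := by
  intro d hd0 hdn
  have hc0 : (0:ℝ) < c := by linarith
  have hc1 : (0:ℝ) < c - 1 := by linarith
  set τ := min (n / 2) (n / c) with hτ
  have hτ2 : τ ≤ n / 2 := min_le_left _ _
  have hτc : τ ≤ n / c := min_le_right _ _
  rcases lt_or_ge d τ with h1 | h1
  · -- A turns around; rendezvous at t = (n+d)/(c+1)
    refine ⟨(n + d) / (c + 1), by positivity, ?_, -1, ?_⟩
    · rcases le_total c 2 with h2 | h2
      · refine le_max_of_le_left ?_
        rw [div_le_div_iff₀ (by linarith) (by linarith)]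
        have hd : d ≤ n / 2 := le_trans h1.le hτ2
        nlinarith [mul_nonneg (sub_nonneg.mpr h2) (sub_nonneg.mpr hd)]
      · refine le_max_of_le_right ?_
        rw [div_le_div_iff₀ (by linarith) hc0]
        have hd : d * c ≤ n := by
          have hd' : d ≤ n / c := le_trans h1.le hτc
          exact (le_div_iff₀ hc0).mp hd'
        nlinarith
    · have hB : ¬ (n - d < τ) := by
        have hd2 : d < n / 2 := lt_of_lt_of_le h1 hτ2
        push_neg
        calc τ ≤ n / 2 := hτ2
        _ ≤ n - d := by linarith
      have hA2 : ¬ ((n + d) / (c + 1) ≤ d / c) := by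
        rw [not_le, div_lt_div_iff₀ hc0 (by linarith)]
        nlinarith
      simp only [posA, posB, if_pos h1, if_neg hB, if_neg hA2]
      push_cast
      field_simp
      ring
  · rcases lt_or_ge (n - d) τ with h3 | h3
    · -- B turns around; rendezvous at t = (2n-d)/(c+1)
      have hndc : (n - d) * c < n := (lt_div_iff₀ hc0).mp (lt_of_lt_of_le h3 hτc)
      refine ⟨(2 * n - d) / (c + 1), div_nonneg (by linarith) (by linarith), ?_, 0, ?_⟩
      · rcases le_total c 2 with h2 | h2
        · refine le_max_of_le_left ?_
          rw [div_le_div_iff₀ (by linarith) (by linarith)]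
          have hd2 : n / 2 < d := by
            have := lt_of_lt_of_le h3 hτ2; linarith
          nlinarith [mul_nonneg (sub_nonneg.mpr h2) (by linarith : (0:ℝ) ≤ d - n / 2)]
        · refine le_max_of_le_right ?_
          rw [div_le_div_iff₀ (by linarith) hc0]
          nlinarith
      · have hA : ¬ (d < τ) := not_lt.mpr h1
        have hB2 : ¬ ((2 * n - d) / (c + 1) ≤ n - d) := by
          rw [not_le, lt_div_iff₀ (by linarith)]
          nlinarith
        simp only [posA, posB, if_neg hA, if_pos h3, if_neg hB2]
        push_cast
        field_simp
        ring
    · -- nobody turns before rendezvous at t = d/(c-1)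
      refine ⟨d / (c - 1), by positivity, ?_, 0, ?_⟩
      · rcases le_total c 2 with h2 | h2
        · refine le_max_of_le_left ?_
          rw [div_le_div_iff₀ hc1 (by linarith)]
          have hn2 : n / 2 ≤ τ := le_min le_rfl (by rw [div_le_div_iff₀ (by norm_num) hc0]; nlinarith)
          have hd : d ≤ n / 2 := by linarith
          nlinarith
        · refine le_max_of_le_right ?_
          rw [div_le_div_iff₀ hc1 hc0]
          have hnc : n / c ≤ τ := le_min (by rw [div_le_div_iff₀ hc0 (by norm_num)]; nlinarith) le_rfl
          have hd : d ≤ n - n / c := by linarith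
          have hcn : (n / c) * c = n := div_mul_cancel₀ n (ne_of_gt hc0)
          nlinarith
      · have hA : ¬ (d < τ) := not_lt.mpr h1
        have hB : ¬ (n - d < τ) := not_lt.mpr h3
        simp only [posA, posB, if_neg hA, if_neg hB]
        push_cast
        field_simp
        ring
end

section
/- Let c > 1 and n > 0. Suppose f : [0, T] → ℝ is a function with f(0) = 0 such that (Rule 1) f is Lipschitz with constant c + 1, and (Rule 2) |f(t)| ≤ t(c - 1) for all t ∈ [0, T]. If the image of the map t ↦ f(t) mod n covers all of [0, n), then T ≥ c·n/(c² - 1). -/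
theorem stmt_12 (c n T : ℝ) (hc : 1 < c) (hn : 0 < n)
    (f : ℝ → ℝ) (hf0 : f 0 = 0)
    (hLip : ∀ s t, s ∈ Set.Icc 0 T → t ∈ Set.Icc 0 T → |f s - f t| ≤ (c + 1) * |s - t|)
    (hRule2 : ∀ t, t ∈ Set.Icc 0 T → |f t| ≤ t * (c - 1))
    (hCover : ∀ d, 0 ≤ d → d < n → ∃ t ∈ Set.Icc 0 T, ∃ k : ℤ, f t = d + k * n) :
    T ≥ c * n / (c ^ 2 - 1) := by
  obtain ⟨t0, ht0, _⟩ := hCover 0 le_rfl hn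
  have hT0 : 0 ≤ T := le_trans ht0.1 ht0.2
  have hne : (Set.Icc (0:ℝ) T).Nonempty := ⟨0, Set.left_mem_Icc.2 hT0⟩
  have hcont : ContinuousOn f (Set.Icc 0 T) := by
    have hL : LipschitzOnWith (Real.toNNReal (c + 1)) f (Set.Icc 0 T) := by
      apply LipschitzOnWith.of_dist_le_mul
      intro s hs t ht
      rw [Real.dist_eq, Real.dist_eq, Real.coe_toNNReal _ (by linarith)]
      exact hLip s t hs ht
    exact hL.continuousOn
  obtain ⟨t1, ht1, hmax⟩ := isCompact_Icc.exists_isMaxOn hne hcont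
  obtain ⟨t2, ht2, hmin⟩ := isCompact_Icc.exists_isMinOn hne hcont
  -- claim: n ≤ f t1 - f t2
  have hgap : n ≤ f t1 - f t2 := by
    by_contra h
    push_neg at h
    set y : ℝ := (f t1 + f t2 + n) / 2 with hy
    have hd0 : 0 ≤ Int.fract (y / n) * n :=
      mul_nonneg (Int.fract_nonneg _) hn.le
    have hd1 : Int.fract (y / n) * n < n := by
      nlinarith [Int.fract_lt_one (y / n)]
    obtain ⟨t, ht, k, hk⟩ := hCover _ hd0 hd1
    have hft : f t = y + (k - ⌊y / n⌋ : ℤ) * n := by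
      rw [hk, Int.fract]
      push_cast
      field_simp
      ring
    have hub : f t ≤ f t1 := hmax ht
    have hlb : f t2 ≤ f t := hmin ht
    rcases le_or_gt 0 (k - ⌊y / n⌋ : ℤ) with hj | hj
    · have : (0:ℝ) ≤ ((k - ⌊y / n⌋ : ℤ) : ℝ) * n :=
        mul_nonneg (by exact_mod_cast hj) hn.le
      nlinarith
    · have hji : (k - ⌊y / n⌋ : ℤ) ≤ -1 := by omega
      have hj' : ((k - ⌊y / n⌋ : ℤ) : ℝ) ≤ -1 := by exact_mod_cast hji
      nlinarith [mul_le_mul_of_nonneg_right hj' hn.le]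
  have h1 := (abs_le.1 (hRule2 t1 ht1)).2
  have h2 := (abs_le.1 (hRule2 t2 ht2)).1
  have h3 := hLip t1 t2 ht1 ht2
  have h4 : f t1 - f t2 ≤ |f t1 - f t2| := le_abs_self _
  have hc2 : (0:ℝ) < c ^ 2 - 1 := by nlinarith
  rw [ge_iff_le, div_le_iff₀ hc2]
  rcases abs_cases (t1 - t2) with ⟨he, _⟩ | ⟨he, _⟩ <;>
    rw [he] at h3 <;> nlinarith [ht1.2, ht2.2, ht1.1, ht2.1]
end
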